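/- Fix E ≥ 1 ensembles indexed by e ∈ {1, …, E} with sizes K_e ≥ 1, real parameters a_0, a_e, b_e, positive parameters c_e, and λ > 0, α > 0, β > 0. Let x_{e,k} ∈ ℝ be given data and define, for τ > 0, the joint density p(y, z, τ) = g_{α,β}(τ) · φ_{0, λ/τ}(z) · φ_{a_0 + z, 1/τ}(y) · ∏_{e=1}^E ∏_{k=1}^{K_e} φ_{a_e + b_e z, c_e²/τ}(x_{e,k}). Set α'' = α + (Σ_{e=1}^E K_e)/2, 1/λ'' = Σ_{e=1}^E K_e b_e²/c_e² + 1/λ, m'' = λ'' · Σ_{e=1}^E (b_e/c_e²) · Σ_{k=1}^{K_e} (x_{e,k} − a_e), and β'' = β + (1/2)·( Σ_{e=1}^E Σ_{k=1}^{K_e} (x_{e,k} − a_e)²/c_e² − m''²/λ'' ). Then for every y ∈ ℝ, ∫₀^∞ ∫_ℝ p(y, z, τ) dz dτ = ( ∫_ℝ ∫₀^∞ ∫_ℝ p(y', z, τ) dz dτ dy' ) · Γ(α'' + 1/2) / ( Γ(α'') · √(2π(λ'' + 1)β'') ) · ( 1 + (y − a_0 − m'')² / (2(λ'' + 1)β'')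 )^{−(α'' + 1/2)}. That is, the predictive distribution of Y given the ensembles is a Student distribution with 2α'' degrees of freedom, location a_0 + m'' and scale √((λ'' + 1)β''/α''). -/

import Mathlib

open MeasureTheory Real

/-- The Gamma(α, β) probability density function. -/
noncomputable def gammaPdf (a b t : ℝ) : ℝ :=
  if 0 < t then b ^ a / Real.Gamma a * t ^ (a - 1) * Real.exp (-b * t) else 0

/-- The normal probability density function with mean `m` and variance `v`. -/
noncomputable def normalPdf (m v x : ℝ) : ℝ :=
  (2 * Real.pi * v) ^ (-(1 : ℝ) / 2) * Real.exp (-(x - m) ^ 2 / (2 * v))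

/-!
For `τ > 0` the joint density is, up to a constant factor, `τ ^ α'' * exp (-τ * Q)` with `Q`
quadratic in `z`; completing the square writes `Q = r y + A (z - m)²` with
`r y = β'' + (y - a₀ - m'')² / (2 (λ'' + 1))`. The Gaussian integral in `z` followed by the Gamma
integral in `τ` shows that the marginal density of `y` is proportional to `r y ^ (-(α'' + 1/2))`,
an unnormalised Student density. Its total mass comes from
`∫ (1 + t²) ^ (-(a + 1/2)) = √π Γ(a) / Γ(a + 1/2)`, which is the same Gaussian-Gamma integral
taken in the other order (Fubini).
-/

open Set

theorem integral_rpow_mul_exp_neg_mul_add_mul_sq {τ : ℝ} (hτ : 0 < τ) (a r A m : ℝ) :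
    ∫ z, τ ^ a * exp (-τ * (r + A * (z - m) ^ 2)) =
      √(π / A) * (τ ^ (a - 1 / 2) * exp (-(r * τ))) := by
  have hsplit : ∀ z, τ ^ a * exp (-τ * (r + A * (z - m) ^ 2)) =
      τ ^ a * exp (-(r * τ)) * exp (-(τ * A) * (z - m) ^ 2) := fun z => by
    rw [mul_assoc, ← exp_add]; ring_nf
  simp_rw [hsplit]
  rw [integral_const_mul, integral_sub_right_eq_self (fun z => exp (-(τ * A) * z ^ 2)),
    integral_gaussian, div_mul_eq_div_div_swap, sqrt_div' _ hτ.le, sqrt_eq_rpow τ,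
    rpow_sub hτ]
  field_simp

theorem integral_Ioi_integral_rpow_mul_exp_neg_mul_add_mul_sq {a r : ℝ} (ha : 0 < a + 1 / 2)
    (hr : 0 < r) (A m : ℝ) :
    ∫ τ in Ioi 0, ∫ z, τ ^ a * exp (-τ * (r + A * (z - m) ^ 2)) =
      √(π / A) * Gamma (a + 1 / 2) * r ^ (-(a + 1 / 2)) := by
  rw [setIntegral_congr_fun measurableSet_Ioi
      fun τ hτ => integral_rpow_mul_exp_neg_mul_add_mul_sq hτ a r A m,
    integral_const_mul, show a - 1 / 2 = a + 1 / 2 - 1 by ring,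
    integral_rpow_mul_exp_neg_mul_Ioi ha hr, one_div, inv_rpow hr.le, ← rpow_neg hr.le]
  ring

theorem integral_one_add_sq_rpow_neg {a : ℝ} (ha : 0 < a) :
    ∫ t, (1 + t ^ 2) ^ (-(a + 1 / 2)) = √π * Gamma a / Gamma (a + 1 / 2) := by
  -- the integrand of the Gaussian-Gamma integrals above with `r = A = 1` and `m = 0`
  set F : ℝ → ℝ → ℝ := fun τ t => τ ^ (a - 1 / 2) * exp (-τ * (1 + 1 * (t - 0) ^ 2))
  have hF_slice : ∀ τ ∈ Ioi (0 : ℝ), ∫ t, F τ t = √π * (exp (-τ) * τ ^ (a - 1)) :=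
    fun τ hτ => by
    rw [integral_rpow_mul_exp_neg_mul_add_mul_sq hτ, div_one]; ring_nf
  have hF_int : Integrable (Function.uncurry F) ((volume.restrict (Ioi 0)).prod volume) := by
    refine (integrable_prod_iff (by unfold F; fun_prop)).2 ⟨?_, ?_⟩
    · filter_upwards [ae_restrict_mem measurableSet_Ioi] with τ hτ
      have hsplit : (fun t => F τ t) = fun t => τ ^ (a - 1 / 2) * exp (-τ) * exp (-τ * t ^ 2) := by
        ext t; simp only [F]; rw [mul_assoc, ← exp_add]; ring_nf
      change Integrable (fun t => F τ t)
      rw [hsplit]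
      exact (integrable_exp_neg_mul_sq hτ).const_mul _
    · refine ((GammaIntegral_convergent ha).const_mul √π).congr ?_
      filter_upwards [ae_restrict_mem measurableSet_Ioi] with τ hτ
      have hF_nonneg : ∀ t, 0 ≤ F τ t := fun t => by
        have := rpow_nonneg (le_of_lt hτ) (a - 1 / 2); positivity
      simp only [Function.uncurry_apply_pair, Real.norm_of_nonneg (hF_nonneg _)]
      exact (hF_slice τ hτ).symm
  have hF_gamma : ∀ t, ∫ τ in Ioi 0, F τ t = Gamma (a + 1 / 2) * (1 + t ^ 2) ^ (-(a + 1 / 2)) :=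
    fun t => by
    have ht : 0 < 1 + t ^ 2 := by positivity
    simp only [F, show a - 1 / 2 = a + 1 / 2 - 1 by ring, one_mul, sub_zero, neg_mul,
      mul_comm _ (1 + t ^ 2)]
    rw [integral_rpow_mul_exp_neg_mul_Ioi (by linarith) ht, one_div, inv_rpow ht.le,
      ← rpow_neg ht.le, mul_comm]
  have hΓ : Gamma (a + 1 / 2) ≠ 0 := (Gamma_pos_of_pos (by linarith)).ne'
  calc ∫ t, (1 + t ^ 2) ^ (-(a + 1 / 2))
      = (∫ t, ∫ τ in Ioi 0, F τ t) / Gamma (a + 1 / 2) := by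
        simp only [hF_gamma, integral_const_mul]; field_simp
    _ = (∫ τ in Ioi 0, ∫ t, F τ t) / Gamma (a + 1 / 2) := by
        rw [integral_integral_swap hF_int]
    _ = √π * Gamma a / Gamma (a + 1 / 2) := by
        rw [integral_Ioi_integral_rpow_mul_exp_neg_mul_add_mul_sq (by simpa) one_pos]
        simp

theorem integral_one_add_sub_sq_div_rpow_neg {a w : ℝ} (ha : 0 < a) (hw : 0 < w) (μ : ℝ) :
    ∫ y, (1 + (y - μ) ^ 2 / w) ^ (-(a + 1 / 2)) = √(π * w) * Gamma a / Gamma (a + 1 / 2) := by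
  have hscale : ∀ y, (y - μ) ^ 2 / w = ((√w)⁻¹ * (y - μ)) ^ 2 := fun y => by
    rw [mul_pow, inv_pow, sq_sqrt hw.le, inv_mul_eq_div]
  simp_rw [hscale]
  rw [integral_sub_right_eq_self (fun y => (1 + ((√w)⁻¹ * y) ^ 2) ^ (-(a + 1 / 2))) μ,
    Measure.integral_comp_mul_left (fun t => (1 + t ^ 2) ^ (-(a + 1 / 2))), inv_inv,
    abs_of_pos (sqrt_pos.2 hw), smul_eq_mul, integral_one_add_sq_rpow_neg ha,
    sqrt_mul pi_nonneg]
  ring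

theorem eq_integral_mul_student_of_forall_eq_mul {L : ℝ → ℝ} {C a w μ : ℝ} (ha : 0 < a)
    (hw : 0 < w) (hL : ∀ y, L y = C * (1 + (y - μ) ^ 2 / w) ^ (-(a + 1 / 2))) (y : ℝ) :
    L y = (∫ y', L y') * (Gamma (a + 1 / 2) / (Gamma a * √(π * w))) *
      (1 + (y - μ) ^ 2 / w) ^ (-(a + 1 / 2)) := by
  have := (Gamma_pos_of_pos ha).ne'
  have := (Gamma_pos_of_pos (by linarith : 0 < a + 1 / 2)).ne'
  have := (sqrt_pos.2 (mul_pos pi_pos hw)).ne'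
  simp only [hL, integral_const_mul, integral_one_add_sub_sq_div_rpow_neg ha hw]
  field_simp

theorem normalPdf_div {w τ : ℝ} (hw : 0 < w) (hτ : 0 < τ) (m x : ℝ) :
    normalPdf m (w / τ) x =
      (2 * π * w) ^ (-(1 : ℝ) / 2) * τ ^ (1 / 2 : ℝ) * exp (-τ * ((x - m) ^ 2 / w) / 2) := by
  rw [normalPdf, mul_div_assoc', div_rpow (by positivity) hτ.le, div_eq_mul_inv,
    ← rpow_neg hτ.le]
  congr 2
  · norm_num
  · field_simp

theorem prod_mul_rpow_mul_exp {ι : Type*} (s : Finset ι) {τ : ℝ} (hτ : 0 < τ)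
    (f u g : ι → ℝ) :
    ∏ i ∈ s, f i * τ ^ u i * exp (g i) =
      (∏ i ∈ s, f i) * τ ^ (∑ i ∈ s, u i) * exp (∑ i ∈ s, g i) := by
  rw [Finset.prod_mul_distrib, Finset.prod_mul_distrib, rpow_sum_of_pos hτ, exp_sum]

theorem prod_prod_normalPdf_div {E : ℕ} {K : Fin E → ℕ} {w : Fin E → ℝ} (hw : ∀ e, 0 < w e)
    {τ : ℝ} (hτ : 0 < τ) (m : Fin E → ℝ) (x : (e : Fin E) → Fin (K e) → ℝ) :
    ∏ e, ∏ k, normalPdf (m e) (w e / τ) (x e k) =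
      (∏ e, ((2 * π * w e) ^ (-(1 : ℝ) / 2)) ^ K e) * τ ^ ((∑ e, (K e : ℝ)) / 2) *
        exp (-τ * (∑ e, ∑ k, (x e k - m e) ^ 2 / w e) / 2) := by
  simp only [normalPdf_div (hw _) hτ, prod_mul_rpow_mul_exp _ hτ, Finset.prod_const,
    Finset.card_univ, Fintype.card_fin, Finset.sum_const, nsmul_eq_mul, Finset.sum_div,
    Finset.mul_sum, neg_mul, neg_div, Finset.sum_neg_distrib, mul_one_div]

theorem exists_gammaPdf_mul_normalPdf_eq {E : ℕ} {K : Fin E → ℕ} {c : Fin E → ℝ}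
    (hc : ∀ e, 0 < c e) {lam : ℝ} (hlam : 0 < lam) (α β a₀ : ℝ) (a b : Fin E → ℝ)
    (x : (e : Fin E) → Fin (K e) → ℝ) :
    ∃ C, ∀ y z τ, 0 < τ →
      gammaPdf α β τ * normalPdf 0 (lam / τ) z * normalPdf (a₀ + z) (1 / τ) y *
        ∏ e, ∏ k, normalPdf (a e + b e * z) (c e ^ 2 / τ) (x e k) =
      C * (τ ^ (α + (∑ e, (K e : ℝ)) / 2) * exp (-τ * (β + (z ^ 2 / lam + (y - (a₀ + z)) ^ 2 +
        ∑ e, ∑ k, (x e k - (a e + b e * z)) ^ 2 / c e ^ 2) / 2))) := by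
  refine ⟨β ^ α / Gamma α * (2 * π * lam) ^ (-(1 : ℝ) / 2) * (2 * π * 1) ^ (-(1 : ℝ) / 2) *
    ∏ e, ((2 * π * c e ^ 2) ^ (-(1 : ℝ) / 2)) ^ K e, fun y z τ hτ => ?_⟩
  have hpow : τ ^ (α + (∑ e, (K e : ℝ)) / 2) =
      τ ^ (α - 1) * τ ^ (1 / 2 : ℝ) * τ ^ (1 / 2 : ℝ) * τ ^ ((∑ e, (K e : ℝ)) / 2) := by
    simp only [← rpow_add hτ]; ring_nf
  rw [gammaPdf, if_pos hτ, normalPdf_div hlam hτ, normalPdf_div one_pos hτ,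
    prod_prod_normalPdf_div (fun e => pow_pos (hc e) 2) hτ, hpow]
  simp only [mul_add, add_div, exp_add]
  ring_nf

theorem sum_sum_sq_sub_add_mul_div {E : ℕ} {K : Fin E → ℕ} (a b c : Fin E → ℝ)
    (x : (e : Fin E) → Fin (K e) → ℝ) (z : ℝ) :
    ∑ e, ∑ k, (x e k - (a e + b e * z)) ^ 2 / c e ^ 2 =
      ∑ e, ∑ k, (x e k - a e) ^ 2 / c e ^ 2 - 2 * z * ∑ e, b e / c e ^ 2 * ∑ k, (x e k - a e) +
        z ^ 2 * ∑ e, (K e : ℝ) * b e ^ 2 / c e ^ 2 := by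
  have hK : ∀ e, (K e : ℝ) * b e ^ 2 / c e ^ 2 = ∑ _k : Fin (K e), b e ^ 2 / c e ^ 2 := by
    simp [mul_div_assoc]
  simp only [hK, Finset.mul_sum, ← Finset.sum_sub_distrib, ← Finset.sum_add_distrib]
  exact Finset.sum_congr rfl fun e _ => Finset.sum_congr rfl fun k _ => by ring

theorem complete_square {lam lam'' R T S β m'' β'' : ℝ} (hlam : lam ≠ 0) (hlam''_pos : 0 < lam'')
    (hlam'' : lam''⁻¹ = R + lam⁻¹) (hm'' : m'' = lam'' * T)
    (hβ'' : β'' = β + 1 / 2 * (S - m'' ^ 2 / lam'')) (d z : ℝ) :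
    β + (z ^ 2 / lam + (d - z) ^ 2 + (S - 2 * z * T + z ^ 2 * R)) / 2 =
      β'' + (d - m'') ^ 2 / (2 * (lam'' + 1)) +
        (lam'' + 1) / (2 * lam'') * (z - (m'' + lam'' * d) / (lam'' + 1)) ^ 2 := by
  obtain rfl : R = lam''⁻¹ - lam⁻¹ := by rw [hlam'']; ring
  subst hm'' hβ''
  field_simp
  ring

theorem posterior_rate_pos {E : ℕ} {K : Fin E → ℕ} {a b c : Fin E → ℝ}
    {x : (e : Fin E) → Fin (K e) → ℝ} {lam lam'' β m'' β'' : ℝ} (hlam : 0 < lam) (hβ : 0 < β)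
    (hlam'' : lam''⁻¹ = (∑ e, (K e : ℝ) * (b e) ^ 2 / (c e) ^ 2) + lam⁻¹)
    (hm'' : m'' = lam'' * ∑ e, (b e / (c e) ^ 2) * ∑ k, (x e k - a e))
    (hβ'' : β'' = β + (1 / 2) *
      ((∑ e, ∑ k, (x e k - a e) ^ 2 / (c e) ^ 2) - m'' ^ 2 / lam'')) :
    0 < β'' := by
  have hlam''_pos : 0 < lam'' := inv_pos.1 (hlam'' ▸ by positivity)
  -- `2 (β'' - β)` is the value at `z = m''` of the nonnegative quadratic form in `z`
  have hsq : 0 ≤ m'' ^ 2 / lam + ∑ e, ∑ k, (x e k - (a e + b e * m'')) ^ 2 / c e ^ 2 := by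
    positivity
  rw [sum_sum_sq_sub_add_mul_div] at hsq
  have hT : ∑ e, (b e / (c e) ^ 2) * ∑ k, (x e k - a e) = m'' / lam'' := by
    rw [hm'']; field_simp
  have hR : ∑ e, (K e : ℝ) * (b e) ^ 2 / (c e) ^ 2 = lam''⁻¹ - lam⁻¹ := by rw [hlam'']; ring
  rw [hT, hR] at hsq
  have hmin : ∀ S, m'' ^ 2 / lam + (S - 2 * m'' * (m'' / lam'') + m'' ^ 2 * (lam''⁻¹ - lam⁻¹)) =
      S - m'' ^ 2 / lam'' := fun S => by field_simp; ring
  rw [hmin] at hsq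
  rw [hβ'']; linarith

theorem predictive_distribution_is_student_general
    (E : ℕ) (K : Fin E → ℕ)
    (a₀ : ℝ) (a b c : Fin E → ℝ) (hc : ∀ e, 0 < c e)
    (lam α β : ℝ) (hlam : 0 < lam) (hα : 0 < α) (hβ : 0 < β)
    (x : (e : Fin E) → Fin (K e) → ℝ)
    (p : ℝ → ℝ → ℝ → ℝ)
    (hp : ∀ y z τ, p y z τ =
      gammaPdf α β τ * normalPdf 0 (lam / τ) z * normalPdf (a₀ + z) (1 / τ) y *
        ∏ e, ∏ k, normalPdf (a e + b e * z) ((c e) ^ 2 / τ) (x e k))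
    (α'' : ℝ) (hα'' : α'' = α + (∑ e, (K e : ℝ)) / 2)
    (lam'' : ℝ) (hlam'' : lam''⁻¹ = (∑ e, (K e : ℝ) * (b e) ^ 2 / (c e) ^ 2) + lam⁻¹)
    (m'' : ℝ) (hm'' : m'' = lam'' * ∑ e, (b e / (c e) ^ 2) * ∑ k, (x e k - a e))
    (β'' : ℝ)
    (hβ'' : β'' = β + (1 / 2) *
      ((∑ e, ∑ k, (x e k - a e) ^ 2 / (c e) ^ 2) - m'' ^ 2 / lam'')) :
    ∀ y : ℝ,
      (∫ τ in Set.Ioi (0 : ℝ), ∫ z : ℝ, p y z τ) =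
      (∫ y' : ℝ, ∫ τ in Set.Ioi (0 : ℝ), ∫ z : ℝ, p y' z τ) *
        (Real.Gamma (α'' + 1 / 2) /
          (Real.Gamma α'' * Real.sqrt (2 * Real.pi * (lam'' + 1) * β''))) *
        (1 + (y - a₀ - m'') ^ 2 / (2 * (lam'' + 1) * β'')) ^ (-(α'' + 1 / 2)) := by
  have hlam''_pos : 0 < lam'' := inv_pos.1 (hlam'' ▸ by positivity)
  have hβ''_pos : 0 < β'' := posterior_rate_pos hlam hβ hlam'' hm'' hβ''
  have hα''_pos : 0 < α'' := hα'' ▸ by positivity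
  obtain ⟨C, hC⟩ := exists_gammaPdf_mul_normalPdf_eq hc hlam α β a₀ a b x
  have hL : ∀ y, ∫ τ in Ioi 0, ∫ z, p y z τ =
      C * √(π / ((lam'' + 1) / (2 * lam''))) * Gamma (α'' + 1 / 2) * β'' ^ (-(α'' + 1 / 2)) *
        (1 + (y - (a₀ + m'')) ^ 2 / (2 * (lam'' + 1) * β'')) ^ (-(α'' + 1 / 2)) := by
    intro y
    have hr : β'' + (y - a₀ - m'') ^ 2 / (2 * (lam'' + 1)) =
        β'' * (1 + (y - (a₀ + m'')) ^ 2 / (2 * (lam'' + 1) * β'')) := by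
      field_simp; ring
    calc ∫ τ in Ioi 0, ∫ z, p y z τ
        = C * ∫ τ in Ioi 0, ∫ z, τ ^ α'' * exp (-τ * ((β'' + (y - a₀ - m'') ^ 2 / (2 * (lam'' + 1)))
            + (lam'' + 1) / (2 * lam'') * (z - (m'' + lam'' * (y - a₀)) / (lam'' + 1)) ^ 2)) := by
          rw [← integral_const_mul]
          refine setIntegral_congr_fun measurableSet_Ioi fun τ hτ => ?_
          rw [← integral_const_mul]
          congr 1 with z
          rw [hp, hC y z τ hτ, ← hα'', sum_sum_sq_sub_add_mul_div, sub_add_eq_sub_sub y a₀ z,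
            complete_square hlam.ne' hlam''_pos hlam'' hm'' hβ'']
      _ = _ := by
          rw [integral_Ioi_integral_rpow_mul_exp_neg_mul_add_mul_sq (by positivity) (by positivity),
            hr, mul_rpow hβ''_pos.le (by positivity)]
          ring
  intro y
  rw [eq_integral_mul_student_of_forall_eq_mul hα''_pos (by positivity) hL y, sub_sub,
    show 2 * π * (lam'' + 1) * β'' = π * (2 * (lam'' + 1) * β'') by ring]

/-- In the multi-ensemble exchangeable Gamma-Normal model, the predictive distribution of
`Y` given the ensembles is a Student distribution with `2α''` degrees of freedom,
location `a₀ + m''` and scale `√((λ'' + 1) β'' / α'')`. -/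
theorem predictive_distribution_is_student
    (E : ℕ) (hE : 1 ≤ E) (K : Fin E → ℕ) (hK : ∀ e, 1 ≤ K e)
    (a₀ : ℝ) (a b c : Fin E → ℝ) (hc : ∀ e, 0 < c e)
    (lam α β : ℝ) (hlam : 0 < lam) (hα : 0 < α) (hβ : 0 < β)
    (x : (e : Fin E) → Fin (K e) → ℝ)
    (p : ℝ → ℝ → ℝ → ℝ)
    (hp : ∀ y z τ, p y z τ =
      gammaPdf α β τ * normalPdf 0 (lam / τ) z * normalPdf (a₀ + z) (1 / τ) y *
        ∏ e, ∏ k, normalPdf (a e + b e * z) ((c e) ^ 2 / τ) (x e k))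
    (α'' : ℝ) (hα'' : α'' = α + (∑ e, (K e : ℝ)) / 2)
    (lam'' : ℝ) (hlam'' : lam''⁻¹ = (∑ e, (K e : ℝ) * (b e) ^ 2 / (c e) ^ 2) + lam⁻¹)
    (m'' : ℝ) (hm'' : m'' = lam'' * ∑ e, (b e / (c e) ^ 2) * ∑ k, (x e k - a e))
    (β'' : ℝ)
    (hβ'' : β'' = β + (1 / 2) *
      ((∑ e, ∑ k, (x e k - a e) ^ 2 / (c e) ^ 2) - m'' ^ 2 / lam'')) :
    ∀ y : ℝ,
      (∫ τ in Set.Ioi (0 : ℝ), ∫ z : ℝ, p y z τ) =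
      (∫ y' : ℝ, ∫ τ in Set.Ioi (0 : ℝ), ∫ z : ℝ, p y' z τ) *
        (Real.Gamma (α'' + 1 / 2) /
          (Real.Gamma α'' * Real.sqrt (2 * Real.pi * (lam'' + 1) * β''))) *
        (1 + (y - a₀ - m'') ^ 2 / (2 * (lam'' + 1) * β'')) ^ (-(α'' + 1 / 2)) :=
  predictive_distribution_is_student_general E K a₀ a b c hc lam α β hlam hα hβ x p hp α'' hα''
    lam'' hlam'' m'' hm'' β'' hβ''
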